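/- arXiv:1407.2171 — 2 statements merged into one kernel-verified Lean document; each statement's English description precedes it below -/
import Mathlib

section
/- There exists an absolute constant c > 0 such that for every compact connected subset K of the unit disk D and every 0 < ε < 1: if the pseudo-hyperbolic diameter of K is greater than 1 − ε, then capa(K) ≥ c · log(1/ε), where capa(K) is the Green capacity of K in D. -/
open MeasureTheory Set Filter
open scoped ENNReal NNReal

noncomputable section

/-- The open unit disk in the complex plane. -/
def unitDisk : Set ℂ := {z : ℂ | ‖z‖ < 1}

/-- The Green function of the unit disk, `g(z,w) = log |(1 - w̄ z)/(z - w)|`,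
with value `⊤` on the diagonal. -/
def greenFnE (z w : ℂ) : ℝ≥0∞ :=
  if z = w then ⊤ else ENNReal.ofReal (Real.log ‖(1 - (starRingEnd ℂ) w * z) / (z - w)‖)

/-- The Green energy `I(μ) = ∬ g(z,w) dμ(z) dμ(w)` of a measure. -/
def greenEnergy (μ : Measure ℂ) : ℝ≥0∞ := ∫⁻ z, ∫⁻ w, greenFnE z w ∂μ ∂μ

/-- `greenV E = V(E)`: the infimum of energies of probability measures supported by a
compact subset of `E`. -/
def greenV (E : Set ℂ) : ℝ≥0∞ :=
  ⨅ (μ : Measure ℂ) (_ : IsProbabilityMeasure μ)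
    (_ : ∃ K : Set ℂ, K ⊆ E ∧ IsCompact K ∧ μ Kᶜ = 0), greenEnergy μ

/-- The Green capacity `capa(E) = 1/V(E)` of `E` in the unit disk. -/
def greenCapa (E : Set ℂ) : ℝ≥0∞ := (greenV E)⁻¹

/-- `e^{-1/capa(E)} = e^{-V(E)}`, with the value `0` when `V(E) = ∞` (i.e. `capa(E) = 0`). -/
def expNegV (E : Set ℂ) : ℝ :=
  if greenV E = ⊤ then 0 else Real.exp (-(greenV E).toReal)

/-- The pseudo-hyperbolic distance on the unit disk. -/
def pseudoDist (z w : ℂ) : ℝ := ‖(z - w) / (1 - (starRingEnd ℂ) z * w)‖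

/-- The pseudo-hyperbolic diameter of a set. -/
def pseudoDiam (E : Set ℂ) : ℝ :=
  sSup {d : ℝ | ∃ z ∈ E, ∃ w ∈ E, d = pseudoDist z w}

/-- The `n`-th approximation number `a_n(T) = inf {‖T - R‖ : rank R < n}`. -/
def approxNumber {E F : Type*} [NormedAddCommGroup E] [NormedAddCommGroup F]
    [NormedSpace ℂ E] [NormedSpace ℂ F] (T : E →L[ℂ] F) (n : ℕ) : ℝ :=
  sInf {c : ℝ | ∃ R : E →L[ℂ] F,
    Module.rank ℂ (LinearMap.range (R : E →ₗ[ℂ] F)) < (n : Cardinal) ∧ c = ‖T - R‖}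

/-- The squared norm `‖f‖² = |f(0)|² + ∫_D |f'|² ω dA` (normalized area measure) of the
weighted analytic Hilbert space `H_ω`. -/
def hwNormSq (ω : ℝ → ℝ) (f : ℂ → ℂ) : ℝ :=
  ‖f 0‖ ^ 2 + (∫ z in unitDisk, ‖deriv f z‖ ^ 2 * ω ‖z‖) / Real.pi

/-- Membership in the weighted analytic Hilbert space `H_ω`. -/
def memHw (ω : ℝ → ℝ) (f : ℂ → ℂ) : Prop :=
  DifferentiableOn ℂ f unitDisk ∧
    IntegrableOn (fun z => ‖deriv f z‖ ^ 2 * ω ‖z‖) unitDisk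

/-- The coefficient weights `w_0 = 1`, `w_n = 2 n² ∫_0^1 r^{2n-1} ω(r) dr`. -/
def wcoef (ω : ℝ → ℝ) (n : ℕ) : ℝ :=
  if n = 0 then 1 else 2 * (n : ℝ) ^ 2 * ∫ r in (0:ℝ)..1, r ^ (2 * n - 1) * ω r

/-- Taylor coefficient of `f` at `0`. -/
def taylorCoeff (f : ℂ → ℂ) (n : ℕ) : ℂ := iteratedDeriv n f 0 / (n.factorial : ℂ)

/-- `(1/2π) ∫_0^{2π} |f(r e^{it})|^p dt`. -/
def hpMean (p : ℝ) (f : ℂ → ℂ) (r : ℝ) : ℝ :=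
  (1 / (2 * Real.pi)) *
    ∫ t in (0:ℝ)..(2 * Real.pi), ‖f ((r : ℂ) * Complex.exp ((t : ℂ) * Complex.I))‖ ^ p

/-- The `H^p` norm. -/
def hpNorm (p : ℝ) (f : ℂ → ℂ) : ℝ :=
  sSup {m : ℝ | ∃ r ∈ Set.Ioo (0:ℝ) 1, m = hpMean p f r ^ (1 / p)}

/-- Membership in the Hardy space `H^p`. -/
def memHp (p : ℝ) (f : ℂ → ℂ) : Prop :=
  DifferentiableOn ℂ f unitDisk ∧
    BddAbove {m : ℝ | ∃ r ∈ Set.Ioo (0:ℝ) 1, m = hpMean p f r ^ (1 / p)}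

/-- The squared `H²` norm `‖f‖² = Σ |b_n|²` in terms of Taylor coefficients. -/
def h2NormSq (f : ℂ → ℂ) : ℝ := ∑' n : ℕ, ‖taylorCoeff f n‖ ^ 2

/-- Membership in the Hardy space `H²`. -/
def memH2 (f : ℂ → ℂ) : Prop :=
  DifferentiableOn ℂ f unitDisk ∧ Summable (fun n : ℕ => ‖taylorCoeff f n‖ ^ 2)

/-- The `n`-th Kolmogorov number. -/
def kolmogorovNumber {E F : Type*} [NormedAddCommGroup E] [NormedAddCommGroup F]
    [NormedSpace ℂ E] [NormedSpace ℂ F] (T : E →L[ℂ] F) (n : ℕ) : ℝ :=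
  ⨅ (S : Submodule ℂ F) (_ : Module.rank ℂ S < (n : Cardinal)),
    ⨆ x : {x : E // ‖x‖ ≤ 1}, Metric.infDist (T (x : E)) (S : Set F)

/-- The `n`-th Gelfand number: infimum of norms of restrictions of `T` to closed
subspaces of codimension `< n`. -/
def gelfandNumber {X : Type*} [NormedAddCommGroup X] [NormedSpace ℂ X]
    (T : X →L[ℂ] X) (n : ℕ) : ℝ :=
  ⨅ (F : Submodule ℂ X) (_ : IsClosed (F : Set X))
    (_ : Module.rank ℂ (X ⧸ F) < (n : Cardinal)),
    ⨆ x : {x : X // x ∈ F ∧ ‖x‖ ≤ 1}, ‖T (x : X)‖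

/-- `ε_n(T) = inf_{dim E < n} sup_{x ∈ B_X} dist (T x, T(E))`. -/
def epsApprox {X : Type*} [NormedAddCommGroup X] [NormedSpace ℂ X]
    (T : X →L[ℂ] X) (n : ℕ) : ℝ :=
  ⨅ (E : Submodule ℂ X) (_ : Module.rank ℂ E < (n : Cardinal)),
    ⨆ x : {x : X // ‖x‖ ≤ 1}, Metric.infDist (T (x : X)) (T '' (E : Set X))

/-!
Pick `a, b ∈ K` with `ρ(a, b) > 1 - ε` and put `T = artanh (1 - ε) ≥ ½ log (1/ε)`. As `K` is
connected, `ρ(a, ·)` takes every value `tanh t`, `0 ≤ t ≤ T`, on `K`; a measurable choice of such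
points `z t` pushes the uniform probability on `[0, T]` forward to a probability measure on `K`.
The triangle inequality of the hyperbolic metric `artanh ρ` (Möbius invariance of `ρ` reduces it
to the radial case) gives `ρ(z s, z t) ≥ tanh |s - t|`, hence
`g(z s, z t) ≤ log coth |s - t| ≤ 2 |s - t|^(-1/2) e^(-|s - t|/2)`, a kernel of total mass
`4 √(2π)` on `ℝ`. So the energy is at most `4 √(2π) / T`, and `capa K ≥ T / (4 √(2π))`.
-/

open ComplexConjugate ProbabilityTheory

section PseudoHyperbolic

variable {a b z w : ℂ}

theorem one_sub_conj_mul_ne_zero (hz : ‖z‖ < 1) (hw : ‖w‖ < 1) : 1 - conj z * w ≠ 0 := by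
  intro h
  have : ‖conj z * w‖ < 1 := by
    rw [norm_mul, Complex.norm_conj]
    nlinarith [norm_nonneg z, norm_nonneg w]
  rw [← sub_eq_zero.mp h, norm_one] at this
  exact this.false

theorem norm_one_sub_conj_mul_comm (z w : ℂ) : ‖1 - conj w * z‖ = ‖1 - conj z * w‖ := by
  rw [← Complex.norm_conj (1 - conj z * w)]
  simp [mul_comm]

theorem pseudoDist_self (z : ℂ) : pseudoDist z z = 0 := by simp [pseudoDist]

theorem normSq_one_sub_conj_mul_sub_normSq_sub (z w : ℂ) :
    Complex.normSq (1 - conj z * w) - Complex.normSq (z - w)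
      = (1 - Complex.normSq z) * (1 - Complex.normSq w) := by
  simp only [Complex.normSq_apply, Complex.sub_re, Complex.sub_im, Complex.mul_re,
    Complex.mul_im, Complex.conj_re, Complex.conj_im, Complex.one_re, Complex.one_im]
  ring

theorem one_sub_pseudoDist_sq (hz : ‖z‖ < 1) (hw : ‖w‖ < 1) :
    1 - pseudoDist z w ^ 2 = (1 - ‖z‖ ^ 2) * (1 - ‖w‖ ^ 2) / ‖1 - conj z * w‖ ^ 2 := by
  have hden : ‖1 - conj z * w‖ ^ 2 ≠ 0 := by
    simpa using one_sub_conj_mul_ne_zero hz hw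
  rw [pseudoDist, norm_div, div_pow, eq_div_iff hden, sub_mul, div_mul_cancel₀ _ hden]
  simp only [Complex.sq_norm]
  linarith [normSq_one_sub_conj_mul_sub_normSq_sub z w]

theorem pseudoDist_lt_one (hz : ‖z‖ < 1) (hw : ‖w‖ < 1) : pseudoDist z w < 1 := by
  have hpos : 0 < (1 - ‖z‖ ^ 2) * (1 - ‖w‖ ^ 2) / ‖1 - conj z * w‖ ^ 2 := by
    have := one_sub_conj_mul_ne_zero hz hw
    have : ‖z‖ ^ 2 < 1 := by nlinarith [norm_nonneg z]
    have : ‖w‖ ^ 2 < 1 := by nlinarith [norm_nonneg w]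
    apply div_pos <;> [nlinarith; positivity]
  rw [← one_sub_pseudoDist_sq hz hw] at hpos
  nlinarith [show 0 ≤ pseudoDist z w from norm_nonneg _]

theorem abs_norm_sub_norm_div_le_pseudoDist (hz : ‖z‖ < 1) (hw : ‖w‖ < 1) :
    |‖z‖ - ‖w‖| / (1 - ‖z‖ * ‖w‖) ≤ pseudoDist z w := by
  have hzw : 0 < 1 - ‖z‖ * ‖w‖ := by nlinarith [norm_nonneg z, norm_nonneg w]
  have hden : 1 - ‖z‖ * ‖w‖ ≤ ‖1 - conj z * w‖ := by
    calc 1 - ‖z‖ * ‖w‖ = ‖(1 : ℂ)‖ - ‖conj z * w‖ := by simp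
      _ ≤ ‖1 - conj z * w‖ := norm_sub_norm_le _ _
  have key : 1 - pseudoDist z w ^ 2 ≤ 1 - (|‖z‖ - ‖w‖| / (1 - ‖z‖ * ‖w‖)) ^ 2 := by
    rw [one_sub_pseudoDist_sq hz hw, div_pow, sq_abs, one_sub_div (by positivity)]
    have : 0 ≤ (1 - ‖z‖ ^ 2) * (1 - ‖w‖ ^ 2) := mul_nonneg
      (by nlinarith [norm_nonneg z]) (by nlinarith [norm_nonneg w])
    calc _ ≤ (1 - ‖z‖ ^ 2) * (1 - ‖w‖ ^ 2) / (1 - ‖z‖ * ‖w‖) ^ 2 :=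
          div_le_div_of_nonneg_left this (by positivity) (pow_le_pow_left₀ hzw.le hden 2)
      _ = _ := by congr 1; ring
  have : 0 ≤ pseudoDist z w := norm_nonneg _
  nlinarith [div_nonneg (abs_nonneg (‖z‖ - ‖w‖)) hzw.le]

def mobius (a z : ℂ) : ℂ := (z - a) / (1 - conj a * z)

theorem norm_mobius (a z : ℂ) : ‖mobius a z‖ = pseudoDist a z := by
  rw [mobius, pseudoDist, norm_div, norm_div, norm_sub_rev]

theorem pseudoDist_mobius (ha : ‖a‖ < 1) (hz : ‖z‖ < 1) (hw : ‖w‖ < 1) :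
    pseudoDist (mobius a z) (mobius a w) = pseudoDist z w := by
  have hz' := one_sub_conj_mul_ne_zero ha hz
  have hw' := one_sub_conj_mul_ne_zero ha hw
  have hz'' : 1 - a * conj z ≠ 0 := by simpa [mul_comm] using (map_ne_zero conj).mpr hz'
  have hsub : mobius a z - mobius a w
      = (1 - conj a * a) * (z - w) / ((1 - conj a * z) * (1 - conj a * w)) := by
    rw [mobius, mobius, div_sub_div _ _ hz' hw']
    ring
  have hden : 1 - conj (mobius a z) * mobius a w
      = (1 - conj a * a) * (1 - conj z * w) / ((1 - a * conj z) * (1 - conj a * w)) := by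
    simp only [mobius, map_div₀, map_sub, map_one, map_mul, Complex.conj_conj]
    rw [div_mul_div_comm, one_sub_div (mul_ne_zero hz'' hw')]
    ring
  have hnorm : ‖1 - a * conj z‖ = ‖1 - conj a * z‖ := by
    simpa [mul_comm] using norm_one_sub_conj_mul_comm a z
  have ha' : ‖1 - conj a * a‖ ≠ 0 := norm_ne_zero_iff.mpr (one_sub_conj_mul_ne_zero ha ha)
  rw [pseudoDist, pseudoDist, norm_div, norm_div, hsub, hden]
  simp only [norm_div, norm_mul, hnorm]
  field_simp

theorem abs_sub_div_le_pseudoDist (ha : ‖a‖ < 1) (hz : ‖z‖ < 1) (hw : ‖w‖ < 1) :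
    |pseudoDist a z - pseudoDist a w| / (1 - pseudoDist a z * pseudoDist a w)
      ≤ pseudoDist z w := by
  have h := abs_norm_sub_norm_div_le_pseudoDist (z := mobius a z) (w := mobius a w)
    (norm_mobius a z ▸ pseudoDist_lt_one ha hz) (norm_mobius a w ▸ pseudoDist_lt_one ha hw)
  rwa [norm_mobius, norm_mobius, pseudoDist_mobius ha hz hw] at h

theorem continuousOn_pseudoDist (ha : ‖a‖ < 1) : ContinuousOn (pseudoDist a) unitDisk :=
  ((continuous_const.sub continuous_id).continuousOn.div
    (continuous_const.sub (continuous_const.mul continuous_id)).continuousOn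
    fun _ hz => one_sub_conj_mul_ne_zero ha hz).norm

theorem Icc_subset_image_pseudoDist {K : Set ℂ} (hKD : K ⊆ unitDisk) (hK : IsPreconnected K)
    (ha : a ∈ K) (hb : b ∈ K) : Icc 0 (pseudoDist a b) ⊆ pseudoDist a '' K := by
  simpa only [pseudoDist_self] using
    hK.intermediate_value ha hb ((continuousOn_pseudoDist (hKD ha)).mono hKD)

theorem exists_lt_pseudoDist_of_lt_pseudoDiam {E : Set ℂ} {r : ℝ} (hr : 0 ≤ r)
    (h : r < pseudoDiam E) : ∃ z ∈ E, ∃ w ∈ E, r < pseudoDist z w := by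
  have hne : {d | ∃ z ∈ E, ∃ w ∈ E, d = pseudoDist z w}.Nonempty := by
    by_contra hempty
    rw [pseudoDiam, not_nonempty_iff_eq_empty.mp hempty, Real.sSup_empty] at h
    exact h.not_ge hr
  obtain ⟨_, ⟨z, hz, w, hw, rfl⟩, hlt⟩ := exists_lt_of_lt_csSup hne h
  exact ⟨z, hz, w, hw, hlt⟩

theorem greenFnE_of_ne (h : z ≠ w) :
    greenFnE z w = ENNReal.ofReal (Real.log (pseudoDist z w)⁻¹) := by
  rw [greenFnE, if_neg h, pseudoDist, norm_div, norm_div, inv_div, norm_one_sub_conj_mul_comm,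
    norm_sub_rev]

end PseudoHyperbolic

namespace Real

theorem continuous_tanh : Continuous tanh := by
  simp_rw [funext tanh_eq_sinh_div_cosh]
  exact continuous_sinh.div continuous_cosh fun x => (cosh_pos x).ne'

theorem tanh_strictMono : StrictMono tanh := by
  have hmem (x : ℝ) : tanh x ∈ Ioo (-1) 1 := abs_lt.mp (abs_tanh_lt_one x)
  intro x y hxy
  rwa [← artanh_lt_artanh_iff (hmem x) (hmem y), artanh_tanh, artanh_tanh]

theorem tanh_pos {x : ℝ} (hx : 0 < x) : 0 < tanh x := tanh_zero ▸ tanh_strictMono hx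

theorem tanh_nonneg {x : ℝ} (hx : 0 ≤ x) : 0 ≤ tanh x := tanh_zero ▸ tanh_strictMono.monotone hx

theorem tanh_abs (x : ℝ) : tanh |x| = |tanh x| := by
  rcases le_total 0 x with hx | hx
  · rw [abs_of_nonneg hx, abs_of_nonneg (tanh_nonneg hx)]
  · rw [abs_of_nonpos hx, tanh_neg, abs_of_nonpos (by simpa using tanh_nonneg (neg_nonneg.mpr hx))]

theorem abs_tanh_sub_div (s t : ℝ) :
    |tanh s - tanh t| / (1 - tanh s * tanh t) = tanh |s - t| := by
  have hden : 0 < 1 - tanh s * tanh t := by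
    have := mul_lt_one_of_nonneg_of_lt_one_left (abs_nonneg _) (abs_tanh_lt_one s)
      (abs_tanh_lt_one t).le
    rw [← abs_mul] at this
    linarith [le_abs_self (tanh s * tanh t)]
  rw [← abs_of_pos hden, ← abs_div, tanh_abs, tanh_eq_sinh_div_cosh, tanh_eq_sinh_div_cosh,
    tanh_eq_sinh_div_cosh, sinh_sub, cosh_sub]
  congr 1
  field_simp

theorem log_one_div_le_two_mul_artanh_one_sub {ε : ℝ} (hε0 : 0 < ε) (hε1 : ε < 1) :
    log (1 / ε) ≤ 2 * artanh (1 - ε) := by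
  rw [one_div, artanh_eq_half_log ⟨by linarith, by linarith⟩, ← mul_assoc,
    mul_one_div_cancel two_ne_zero, one_mul, sub_sub_cancel]
  exact log_le_log (by positivity) (by rw [inv_eq_one_div]; gcongr; linarith)

theorem log_le_two_mul_sqrt_sub_one {y : ℝ} (hy : 1 ≤ y) : log y ≤ 2 * √(y - 1) := by
  have h1 : 1 ≤ √y := one_le_sqrt.mpr hy
  have hsq := sq_sqrt (zero_le_one.trans hy)
  calc log y = 2 * log √y := by rw [log_sqrt (zero_le_one.trans hy)]; ring
    _ ≤ 2 * (√y - 1) := by gcongr; exact log_le_sub_one_of_pos (by linarith)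
    _ ≤ 2 * √(y - 1) := by gcongr; exact le_sqrt_of_sq_le (by nlinarith)

theorem log_inv_tanh_le {s : ℝ} (hs : 0 < s) :
    log (tanh s)⁻¹ ≤ 2 * (s ^ (-(1 / 2) : ℝ) * exp (-(s / 2))) := by
  have hcoth : (tanh s)⁻¹ - 1 = exp (-s) / sinh s := by
    rw [tanh_eq_sinh_div_cosh, inv_div, ← cosh_sub_sinh]
    field_simp
  have hkernel : √(exp (-s) / s) = s ^ (-(1 / 2) : ℝ) * exp (-(s / 2)) := by
    rw [sqrt_div' _ hs.le, ← exp_half, neg_div, sqrt_eq_rpow, rpow_neg hs.le, ← sqrt_eq_rpow,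
      div_eq_inv_mul]
  calc log (tanh s)⁻¹ ≤ 2 * √((tanh s)⁻¹ - 1) :=
        log_le_two_mul_sqrt_sub_one ((one_le_inv₀ (tanh_pos hs)).mpr (tanh_lt_one s).le)
    _ ≤ 2 * √(exp (-s) / s) := by
        rw [hcoth]
        gcongr
        exact self_le_sinh_iff.mpr hs.le
    _ = _ := by rw [hkernel]

theorem lintegral_rpow_abs_mul_exp_neg_abs :
    ∫⁻ s : ℝ, ENNReal.ofReal (2 * (|s| ^ (-(1 / 2) : ℝ) * exp (-(|s| / 2))))
      = ENNReal.ofReal (4 * √(2 * π)) := by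
  have hhalf : ∫ s in Ioi (0 : ℝ), s ^ (-(1 / 2) : ℝ) * exp (-(s / 2)) = √(2 * π) := by
    have h := integral_rpow_mul_exp_neg_mul_Ioi (a := 1 / 2) (r := 1 / 2) (by norm_num)
      (by norm_num)
    rw [Gamma_one_half_eq, ← sqrt_eq_rpow, one_div_one_div, ← sqrt_mul zero_le_two] at h
    rw [← h]
    congr 1 with s
    norm_num [div_eq_inv_mul]
  have hfull : ∫ s, 2 * (|s| ^ (-(1 / 2) : ℝ) * exp (-(|s| / 2))) = 4 * √(2 * π) := by
    rw [integral_comp_abs (f := fun s => 2 * (s ^ (-(1 / 2) : ℝ) * exp (-(s / 2)))),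
      integral_const_mul, hhalf]
    ring
  have hint : Integrable fun s : ℝ => 2 * (|s| ^ (-(1 / 2) : ℝ) * exp (-(|s| / 2))) :=
    Integrable.of_integral_ne_zero (by rw [hfull]; positivity)
  rw [← ofReal_integral_eq_lintegral_ofReal hint (ae_of_all _ fun s => by positivity), hfull]

end Real

section MeasurableSelection

variable {X Y : Type*} [TopologicalSpace Y] [T2Space Y]

theorem IsCompact.inter_preimage_singleton [TopologicalSpace X] [T2Space X] {T : Set X}
    (hT : IsCompact T) {F : X → Y} (hF : ContinuousOn F T) (y : Y) :
    IsCompact (T ∩ F ⁻¹' {y}) :=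
  hT.of_isClosed_subset (hF.preimage_isClosed_of_isClosed hT.isClosed isClosed_singleton)
    inter_subset_left

variable [MeasurableSpace Y] [OpensMeasurableSpace Y]

theorem measurable_sInf_inter_preimage_singleton {T : Set ℝ} (hT : IsCompact T) {F : ℝ → Y}
    (hF : ContinuousOn F T) : Measurable fun y => sInf (T ∩ F ⁻¹' {y}) := by
  refine measurable_of_Iic fun q => ?_
  have himage : ∀ S ⊆ T, IsCompact S → MeasurableSet (F '' S) := fun S hST hS =>
    (hS.image_of_continuousOn (hF.mono hST)).measurableSet
  -- on an empty fiber `sInf ∅ = 0`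
  have hpre : (fun y => sInf (T ∩ F ⁻¹' {y})) ⁻¹' Iic q
      = F '' (T ∩ Iic q) ∪ (F '' T)ᶜ ∩ {_y | 0 ≤ q} := by
    ext y
    rcases (T ∩ F ⁻¹' {y}).eq_empty_or_nonempty with h | ⟨t, ht, hty⟩
    · have hy : y ∉ F '' T := fun ⟨t, ht, hty⟩ => h.subset ⟨ht, hty⟩
      have hy' : y ∉ F '' (T ∩ Iic q) := fun hy'' => hy (image_mono inter_subset_left hy'')
      simp [h, hy, hy']
    · have hmem := (hT.inter_preimage_singleton hF y).sInf_mem ⟨t, ht, hty⟩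
      simp only [mem_preimage, mem_Iic, mem_union, mem_inter_iff, mem_compl_iff, mem_image,
        mem_ofPred_eq, not_exists, not_and]
      constructor
      · exact fun hq => Or.inl ⟨_, ⟨hmem.1, hq⟩, hmem.2⟩
      · rintro (⟨s, ⟨hs, hsq⟩, rfl⟩ | ⟨hnot, -⟩)
        · exact (csInf_le (hT.inter_preimage_singleton hF _).bddBelow ⟨hs, rfl⟩).trans hsq
        · exact absurd hty (hnot t ht)
  rw [hpre]
  exact (himage _ inter_subset_left (hT.inter_right isClosed_Iic)).union
    ((himage T subset_rfl hT).compl.inter (MeasurableSet.const _))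

variable [MetricSpace X] [MeasurableSpace X] [BorelSpace X]

theorem IsCompact.exists_measurable_image_cantorSet_eq {K : Set X} (hK : IsCompact K)
    (hK₀ : K.Nonempty) :
    ∃ ψ : ℝ → X, Measurable ψ ∧ ContinuousOn ψ cantorSet ∧ ψ '' cantorSet = K := by
  have := isCompact_iff_compactSpace.mp hK
  have := hK₀.to_subtype
  obtain ⟨φ, hφ, hφs⟩ := exists_nat_bool_continuous_surjective_of_compact K
  set ψ₀ : cantorSet → X := fun t => φ (cantorSetHomeomorphNatToBool t)
  have hψ₀ : Continuous ψ₀ := continuous_subtype_val.comp (hφ.comp (Homeomorph.continuous _))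
  classical
  refine ⟨fun t => if h : t ∈ cantorSet then ψ₀ ⟨t, h⟩ else hK₀.some, ?_, ?_, ?_⟩
  · exact hψ₀.measurable.dite measurable_const isClosed_cantorSet.measurableSet
  · rw [continuousOn_iff_continuous_domRestrict]
    convert hψ₀ using 1
    ext t
    simp [t.2]
  · ext x
    constructor
    · rintro ⟨t, ht, rfl⟩
      simp only [ht, dite_true]
      exact (φ _).2
    · intro hx
      obtain ⟨c, hc⟩ := hφs ⟨x, hx⟩
      exact ⟨_, (cantorSetHomeomorphNatToBool.symm c).2, by simp [ψ₀, hc]⟩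

/-- Parametrizing `K` by the Cantor set reduces the choice of a preimage to taking the least
preimage in a compact subset of `ℝ`. -/
theorem IsCompact.exists_measurable_rightInvOn {K : Set X} (hK : IsCompact K) (hK₀ : K.Nonempty)
    {H : X → Y} (hH : ContinuousOn H K) :
    ∃ g : Y → X, Measurable g ∧ ∀ y ∈ H '' K, g y ∈ K ∧ H (g y) = y := by
  obtain ⟨ψ, hψ, hψc, hψK⟩ := hK.exists_measurable_image_cantorSet_eq hK₀
  have hHψ : ContinuousOn (H ∘ ψ) cantorSet := hH.comp hψc (hψK ▸ mapsTo_image ψ cantorSet)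
  refine ⟨fun y => ψ (sInf (cantorSet ∩ (H ∘ ψ) ⁻¹' {y})),
    hψ.comp (measurable_sInf_inter_preimage_singleton isCompact_cantorSet hHψ), ?_⟩
  rintro y ⟨x, hx, rfl⟩
  rw [← hψK] at hx
  obtain ⟨t, ht, rfl⟩ := hx
  obtain ⟨hmem, hval⟩ :=
    (isCompact_cantorSet.inter_preimage_singleton hHψ _).sInf_mem ⟨t, ht, rfl⟩
  exact ⟨hψK ▸ mem_image_of_mem ψ hmem, hval⟩

end MeasurableSelection

theorem lintegral_lintegral_map_cond_le {β : Type*} [MeasurableSpace β] {s : Set ℝ}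
    (hs : MeasurableSet s) {G : β → β → ℝ≥0∞} {g : ℝ → β} {k : ℝ → ℝ≥0∞}
    (hk : ∀ t ∈ s, ∀ t' ∈ s, t ≠ t' → G (g t) (g t') ≤ k (t - t')) :
    ∫⁻ z, ∫⁻ w, G z w ∂(volume[|s]).map g ∂(volume[|s]).map g
      ≤ (volume s)⁻¹ * ∫⁻ x, k x := by
  have hinner : ∀ t ∈ s, ∫⁻ t', G (g t) (g t') ∂volume[|s] ≤ (volume s)⁻¹ * ∫⁻ x, k x := by
    intro t ht
    rw [ProbabilityTheory.cond, lintegral_smul_measure, smul_eq_mul]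
    gcongr (volume s)⁻¹ * ?_
    calc ∫⁻ t' in s, G (g t) (g t') ≤ ∫⁻ t' in s, k (t - t') := by
          refine lintegral_mono_ae ?_
          filter_upwards [ae_restrict_mem hs, ae_restrict_of_ae (Measure.ae_ne volume t)]
            with t' ht' hne using hk t ht t' ht' hne.symm
      _ ≤ ∫⁻ t', k (t - t') := setLIntegral_le_lintegral _ _
      _ = ∫⁻ x, k x := lintegral_sub_left_eq_self k t
  calc ∫⁻ z, ∫⁻ w, G z w ∂(volume[|s]).map g ∂(volume[|s]).map g
      ≤ ∫⁻ t, ∫⁻ w, G (g t) w ∂(volume[|s]).map g ∂volume[|s] := lintegral_map_le _ _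
    _ ≤ ∫⁻ t, ∫⁻ t', G (g t) (g t') ∂volume[|s] ∂volume[|s] :=
        lintegral_mono fun t => lintegral_map_le _ _
    _ ≤ ∫⁻ _, ((volume s)⁻¹ * ∫⁻ x, k x) ∂volume[|s] :=
        lintegral_mono_ae ((ae_cond_mem hs).mono hinner)
    _ ≤ (volume s)⁻¹ * ∫⁻ x, k x := by
        rw [lintegral_const]
        exact mul_le_of_le_one_right' prob_le_one

theorem greenV_le_greenEnergy {E K : Set ℂ} (hK : IsCompact K) (hKE : K ⊆ E) {μ : Measure ℂ}
    [hμ : IsProbabilityMeasure μ] (hμK : μ Kᶜ = 0) : greenV E ≤ greenEnergy μ :=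
  iInf₂_le_of_le μ hμ (iInf_le_of_le ⟨K, hKE, hK, hμK⟩ le_rfl)

theorem ofReal_inv_le_greenCapa {K : Set ℂ} (hK : IsCompact K) {μ : Measure ℂ}
    [IsProbabilityMeasure μ] (hμK : μ Kᶜ = 0) {r : ℝ} (hr : 0 < r)
    (h : greenEnergy μ ≤ ENNReal.ofReal r) : ENNReal.ofReal r⁻¹ ≤ greenCapa K := by
  rw [greenCapa, ENNReal.ofReal_inv_of_pos hr]
  exact ENNReal.inv_le_inv.mpr ((greenV_le_greenEnergy hK subset_rfl hμK).trans h)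

theorem greenFnE_le_of_pseudoDist_eq_tanh {a z w : ℂ} (ha : ‖a‖ < 1) (hz : ‖z‖ < 1)
    (hw : ‖w‖ < 1) {t t' : ℝ} (htt' : t ≠ t') (hzt : pseudoDist a z = Real.tanh t)
    (hwt : pseudoDist a w = Real.tanh t') :
    greenFnE z w
      ≤ ENNReal.ofReal (2 * (|t - t'| ^ (-(1 / 2) : ℝ) * Real.exp (-(|t - t'| / 2)))) := by
  have hpos : 0 < |t - t'| := abs_pos.mpr (sub_ne_zero.mpr htt')
  have htanh := Real.tanh_pos hpos
  have hρ : Real.tanh |t - t'| ≤ pseudoDist z w := by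
    rw [← Real.abs_tanh_sub_div, ← hzt, ← hwt]
    exact abs_sub_div_le_pseudoDist ha hz hw
  have hzw : z ≠ w := by
    rintro rfl
    rw [pseudoDist_self] at hρ
    exact htanh.not_ge hρ
  rw [greenFnE_of_ne hzw]
  exact ENNReal.ofReal_le_ofReal <|
    (Real.log_le_log (inv_pos.mpr (htanh.trans_le hρ)) (inv_anti₀ htanh hρ)).trans
      (Real.log_inv_tanh_le hpos)

theorem ofReal_div_le_greenCapa_of_tanh_le_pseudoDist {K : Set ℂ} (hK : IsCompact K)
    (hKD : K ⊆ unitDisk) (hKconn : IsPreconnected K) {a b : ℂ} (ha : a ∈ K) (hb : b ∈ K)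
    {T : ℝ} (hT : 0 < T) (hTab : Real.tanh T ≤ pseudoDist a b) :
    ENNReal.ofReal (T / (4 * √(2 * Real.pi))) ≤ greenCapa K := by
  obtain ⟨g, hg, hgK⟩ :=
    hK.exists_measurable_rightInvOn ⟨a, ha⟩ ((continuousOn_pseudoDist (hKD ha)).mono hKD)
  have hgt : ∀ t ∈ Icc 0 T, g (Real.tanh t) ∈ K ∧ pseudoDist a (g (Real.tanh t)) = Real.tanh t :=
    fun t ht => hgK _ <| Icc_subset_image_pseudoDist hKD hKconn ha hb
      ⟨Real.tanh_nonneg ht.1, (Real.tanh_strictMono.monotone ht.2).trans hTab⟩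
  have hmeas : Measurable (g ∘ Real.tanh) := hg.comp Real.continuous_tanh.measurable
  have := cond_isProbabilityMeasure_of_finite (μ := volume) (s := Icc 0 T) (by simp [hT])
    (by simp)
  have := Measure.isProbabilityMeasure_map (μ := volume[|Icc 0 T]) hmeas.aemeasurable
  have hμK : (volume[|Icc 0 T]).map (g ∘ Real.tanh) Kᶜ = 0 := by
    rw [Measure.map_apply hmeas hK.isClosed.measurableSet.compl, measure_eq_zero_iff_ae_notMem]
    filter_upwards [ae_cond_mem measurableSet_Icc] with t ht
    exact not_not_intro (hgt t ht).1
  have henergy : greenEnergy ((volume[|Icc 0 T]).map (g ∘ Real.tanh))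
      ≤ ENNReal.ofReal (4 * √(2 * Real.pi) / T) := by
    refine (lintegral_lintegral_map_cond_le measurableSet_Icc
      (k := fun s => ENNReal.ofReal (2 * (|s| ^ (-(1 / 2) : ℝ) * Real.exp (-(|s| / 2)))))
      fun t ht t' ht' htt' => greenFnE_le_of_pseudoDist_eq_tanh (hKD ha) (hKD (hgt t ht).1)
        (hKD (hgt t' ht').1) htt' (hgt t ht).2 (hgt t' ht').2).trans_eq ?_
    rw [Real.lintegral_rpow_abs_mul_exp_neg_abs, Real.volume_Icc, sub_zero,
      ENNReal.ofReal_div_of_pos hT, ENNReal.div_eq_inv_mul]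
  simpa only [inv_div] using ofReal_inv_le_greenCapa hK hμK (by positivity) henergy

/-- There is an absolute constant `c > 0` such that every compact connected
subset `K` of the unit disk of pseudo-hyperbolic diameter `> 1 - ε` (`0 < ε < 1`) satisfies
`capa(K) ≥ c log(1/ε)`. -/
theorem greenCapa_ge_of_pseudoDiam :
    ∃ c : ℝ, 0 < c ∧
      ∀ K : Set ℂ, IsCompact K → K ⊆ unitDisk → IsConnected K →
        ∀ ε : ℝ, 0 < ε → ε < 1 → 1 - ε < pseudoDiam K →
          ENNReal.ofReal (c * Real.log (1 / ε)) ≤ greenCapa K := by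
  refine ⟨1 / (8 * √(2 * Real.pi)), by positivity, ?_⟩
  intro K hK hKD hKconn ε hε0 hε1 hdiam
  obtain ⟨a, ha, b, hb, hab⟩ := exists_lt_pseudoDist_of_lt_pseudoDiam (by linarith) hdiam
  have hε : 1 - ε ∈ Ioo (-1) 1 := ⟨by linarith, by linarith⟩
  have hT := Real.log_one_div_le_two_mul_artanh_one_sub hε0 hε1
  refine le_trans (ENNReal.ofReal_le_ofReal ?_)
    (ofReal_div_le_greenCapa_of_tanh_le_pseudoDist hK hKD hKconn.isPreconnected ha hb
      (Real.artanh_pos ⟨by linarith, by linarith⟩) (Real.tanh_artanh hε ▸ hab.le))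
  have : 0 < √(2 * Real.pi) := by positivity
  field_simp
  linarith

end
end

section
/- Let H_ω be a weighted analytic Hilbert space and let φ be an analytic self-map of the unit disk D with ρ := ‖φ‖_∞ < 1. Then φ is a symbol for H_ω (i.e. f∘φ ∈ H_ω for all f ∈ H_ω) if and only if φ ∈ H_ω, and in that case, for every integer k ≥ 1 one has ‖φ^k‖² ≤ ρ^{2k} (1 + k² ρ^{−2}) ‖φ‖², where ‖·‖ is the norm of H_ω. -/
open MeasureTheory Set Filter
open scoped ENNReal NNReal

noncomputable section

/-! The derivative of `f ∘ φ` is `(f' ∘ φ) φ'`, and `f'` is bounded on the compact disk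
`|w| ≤ ρ` containing the range of `φ`, so the weighted Dirichlet integral of `f ∘ φ` is at most a
constant times that of `φ`; conversely `φ = id ∘ φ`, and `id ∈ H_ω` because `ω` is integrable.
For the powers, `|(φ^k)'| = k |φ|^{k-1} |φ'| ≤ k ρ^{k-1} |φ'|` and `|φ(0)|^k ≤ k ρ^{k-1} |φ(0)|`,
and `(k ρ^{k-1})² = k² ρ^{2k} ρ^{-2}`. -/

/-- `π ∫_D |f'|² ω dA`: the integral is against Lebesgue measure, not normalized area. -/
def weightedDirichlet (ω : ℝ → ℝ) (f : ℂ → ℂ) : ℝ :=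
  ∫ z in unitDisk, ‖deriv f z‖ ^ 2 * ω ‖z‖

lemma hwNormSq_eq (ω : ℝ → ℝ) (f : ℂ → ℂ) :
    hwNormSq ω f = ‖f 0‖ ^ 2 + weightedDirichlet ω f / Real.pi := rfl

lemma unitDisk_eq_ball : unitDisk = Metric.ball (0 : ℂ) 1 := by
  ext z
  simp [unitDisk]

lemma isOpen_unitDisk : IsOpen unitDisk :=
  unitDisk_eq_ball ▸ Metric.isOpen_ball

lemma measurableSet_unitDisk : MeasurableSet unitDisk :=
  isOpen_unitDisk.measurableSet

lemma zero_mem_unitDisk : (0 : ℂ) ∈ unitDisk := by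
  simp [unitDisk]

lemma norm_mem_Ico_of_mem_unitDisk {z : ℂ} (hz : z ∈ unitDisk) : ‖z‖ ∈ Ico (0 : ℝ) 1 :=
  ⟨norm_nonneg z, hz⟩

section Weight

variable {ω : ℝ → ℝ}

lemma integrableOn_unitDisk_comp_norm (hω : IntegrableOn ω (Ico 0 1)) :
    IntegrableOn (fun z : ℂ => ω ‖z‖) unitDisk := by
  rw [unitDisk_eq_ball, integrableOn_fun_norm_addHaar, Complex.finrank_real_complex]
  refine (hω.mono_set Ioo_subset_Ico_self).bdd_mul (c := 1)
    (continuous_pow 1).aestronglyMeasurable ?_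
  filter_upwards [ae_restrict_mem measurableSet_Ioo] with r hr
  simpa [abs_of_pos hr.1] using hr.2.le

lemma memHw_id (hω : IntegrableOn ω (Ico 0 1)) : memHw ω id :=
  ⟨differentiableOn_id, by simpa using integrableOn_unitDisk_comp_norm hω⟩

lemma weightedDirichlet_nonneg (hω : ∀ r ∈ Ico (0 : ℝ) 1, 0 ≤ ω r) (f : ℂ → ℂ) :
    0 ≤ weightedDirichlet ω f :=
  setIntegral_nonneg measurableSet_unitDisk fun z hz =>
    mul_nonneg (by positivity) (hω _ (norm_mem_Ico_of_mem_unitDisk hz))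

lemma hwNormSq_nonneg (hω : ∀ r ∈ Ico (0 : ℝ) 1, 0 ≤ ω r) (f : ℂ → ℂ) :
    0 ≤ hwNormSq ω f := by
  have := weightedDirichlet_nonneg hω f
  rw [hwNormSq_eq]
  positivity

lemma hwNormSq_eq_zero_of_eqOn_zero {f : ℂ → ℂ} (hf : EqOn f 0 unitDisk) :
    hwNormSq ω f = 0 := by
  have hderiv : EqOn (deriv f) 0 unitDisk := fun z hz => by
    rw [(hf.eventuallyEq_of_mem (isOpen_unitDisk.mem_nhds hz)).deriv_eq]
    simp
  have hintegral : weightedDirichlet ω f = 0 := by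
    rw [weightedDirichlet, setIntegral_congr_fun measurableSet_unitDisk
      (g := fun _ => 0) fun z hz => by simp [hderiv hz]]
    simp
  simp [hwNormSq_eq, hintegral, hf zero_mem_unitDisk]

lemma memHw_of_deriv_eq_mul {φ g h : ℂ → ℂ} {C : ℝ} (hφ : memHw ω φ)
    (hg : DifferentiableOn ℂ g unitDisk) (hh : ContinuousOn h unitDisk)
    (hC : ∀ z ∈ unitDisk, ‖h z‖ ≤ C) (hderiv : ∀ z ∈ unitDisk, deriv g z = h z * deriv φ z) :
    memHw ω g := by
  refine ⟨hg, ?_⟩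
  have hint : IntegrableOn (fun z => ‖h z‖ ^ 2 * (‖deriv φ z‖ ^ 2 * ω ‖z‖)) unitDisk :=
    hφ.2.bdd_mul (c := C ^ 2) ((hh.norm.pow 2).aestronglyMeasurable measurableSet_unitDisk) <| by
      filter_upwards [ae_restrict_mem measurableSet_unitDisk] with z hz
      simpa using pow_le_pow_left₀ (norm_nonneg _) (hC z hz) 2
  refine hint.congr_fun (fun z hz => ?_) measurableSet_unitDisk
  simp only [hderiv z hz, norm_mul, mul_pow, mul_assoc]

lemma hwNormSq_le_of_norm_le {φ g : ℂ → ℂ} {c : ℝ} (hω : ∀ r ∈ Ico (0 : ℝ) 1, 0 ≤ ω r)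
    (hφ : memHw ω φ) (h₀ : ‖g 0‖ ≤ c * ‖φ 0‖)
    (hderiv : ∀ z ∈ unitDisk, ‖deriv g z‖ ≤ c * ‖deriv φ z‖) :
    hwNormSq ω g ≤ c ^ 2 * hwNormSq ω φ := by
  have hω' : ∀ z ∈ unitDisk, 0 ≤ ω ‖z‖ := fun z hz => hω _ (norm_mem_Ico_of_mem_unitDisk hz)
  have hD : weightedDirichlet ω g ≤ c ^ 2 * weightedDirichlet ω φ := by
    rw [weightedDirichlet, weightedDirichlet, ← integral_const_mul]
    refine integral_mono_of_nonneg ?_ (hφ.2.const_mul _) ?_ <;>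
      filter_upwards [ae_restrict_mem measurableSet_unitDisk] with z hz
    · exact mul_nonneg (by positivity) (hω' z hz)
    · calc ‖deriv g z‖ ^ 2 * ω ‖z‖ ≤ (c * ‖deriv φ z‖) ^ 2 * ω ‖z‖ := by
            gcongr
            · exact hω' z hz
            · exact hderiv z hz
        _ = c ^ 2 * (‖deriv φ z‖ ^ 2 * ω ‖z‖) := by ring
  have h₀' : ‖g 0‖ ^ 2 ≤ c ^ 2 * ‖φ 0‖ ^ 2 := by
    rw [← mul_pow]
    gcongr
  rw [hwNormSq_eq, hwNormSq_eq, mul_add, ← mul_div_assoc]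
  gcongr

lemma memHw_comp {φ f : ℂ → ℂ} {ρ : ℝ} (hφ : memHw ω φ) (hf : memHw ω f)
    (hφρ : MapsTo φ unitDisk (Metric.closedBall 0 ρ)) (hρ : ρ < 1) : memHw ω (f ∘ φ) := by
  have hball : Metric.closedBall (0 : ℂ) ρ ⊆ unitDisk := fun w hw =>
    (mem_closedBall_zero_iff.1 hw).trans_lt hρ
  have hφD : MapsTo φ unitDisk unitDisk := hφρ.mono_right hball
  have hf' : ContinuousOn (deriv f) unitDisk :=
    (hf.1.analyticOnNhd isOpen_unitDisk).deriv.continuousOn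
  obtain ⟨C, hC⟩ := (isCompact_closedBall (0 : ℂ) ρ).exists_bound_of_continuousOn (hf'.mono hball)
  refine memHw_of_deriv_eq_mul hφ (hf.1.comp hφ.1 hφD) (hf'.comp hφ.1.continuousOn hφD)
    (fun z hz => hC _ (hφρ hz)) fun z hz => ?_
  exact deriv_comp z (hf.1.differentiableAt (isOpen_unitDisk.mem_nhds (hφD hz)))
    (hφ.1.differentiableAt (isOpen_unitDisk.mem_nhds hz))

lemma hwNormSq_pow_le {φ : ℂ → ℂ} {ρ : ℝ} (hω : ∀ r ∈ Ico (0 : ℝ) 1, 0 ≤ ω r)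
    (hφ : memHw ω φ) (hφρ : ∀ z ∈ unitDisk, ‖φ z‖ ≤ ρ) {k : ℕ} (hk : 1 ≤ k) :
    hwNormSq ω (fun z => φ z ^ k) ≤ ((k : ℝ) * ρ ^ (k - 1)) ^ 2 * hwNormSq ω φ := by
  have hρ : 0 ≤ ρ := (norm_nonneg _).trans (hφρ 0 zero_mem_unitDisk)
  refine hwNormSq_le_of_norm_le hω hφ ?_ fun z hz => ?_
  · calc ‖φ 0 ^ k‖ = ‖φ 0‖ ^ (k - 1) * ‖φ 0‖ := by
          rw [norm_pow, ← pow_succ, Nat.sub_add_cancel hk]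
      _ ≤ k * ρ ^ (k - 1) * ‖φ 0‖ := by
          gcongr
          calc ‖φ 0‖ ^ (k - 1) ≤ ρ ^ (k - 1) := by gcongr; exact hφρ 0 zero_mem_unitDisk
            _ ≤ k * ρ ^ (k - 1) := le_mul_of_one_le_left (by positivity) (by exact_mod_cast hk)
  · rw [deriv_fun_pow (hφ.1.differentiableAt (isOpen_unitDisk.mem_nhds hz)), norm_mul, norm_mul,
      norm_pow, Complex.norm_natCast]
    gcongr
    exact hφρ z hz

end Weight

lemma sq_natCast_mul_pow_pred_le {ρ : ℝ} (hρ : ρ ≠ 0) {k : ℕ} (hk : 1 ≤ k) :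
    ((k : ℝ) * ρ ^ (k - 1)) ^ 2 ≤ ρ ^ (2 * k) * (1 + (k : ℝ) ^ 2 * (ρ ^ 2)⁻¹) := by
  have hsq : ((k : ℝ) * ρ ^ (k - 1)) ^ 2 = ρ ^ (2 * k) * ((k : ℝ) ^ 2 * (ρ ^ 2)⁻¹) := by
    obtain ⟨j, rfl⟩ := Nat.exists_eq_add_of_le' hk
    rw [Nat.add_sub_cancel]
    field_simp
    ring
  rw [hsq, mul_one_add]
  have : 0 ≤ ρ ^ (2 * k) := by rw [pow_mul]; positivity
  linarith

theorem symbol_iff_mem_and_power_bound_general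
    (ω : ℝ → ℝ)
    (hω_pos : ∀ r ∈ Set.Ico (0:ℝ) 1, 0 < ω r)
    (hω_int : IntegrableOn ω (Set.Ico 0 1))
    (φ : ℂ → ℂ)
    (ρ : ℝ) (hρ_lub : IsLUB ((fun z => ‖φ z‖) '' unitDisk) ρ) (hρ_lt : ρ < 1) :
    ((∀ f : ℂ → ℂ, memHw ω f → memHw ω (f ∘ φ)) ↔ memHw ω φ) ∧
      (memHw ω φ → ∀ k : ℕ, 1 ≤ k →
        hwNormSq ω (fun z => φ z ^ k)
          ≤ ρ ^ (2 * k) * (1 + (k : ℝ) ^ 2 * (ρ ^ 2)⁻¹) * hwNormSq ω φ) := by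
  have hω : ∀ r ∈ Ico (0 : ℝ) 1, 0 ≤ ω r := fun r hr => (hω_pos r hr).le
  have hφρ : ∀ z ∈ unitDisk, ‖φ z‖ ≤ ρ := fun z hz => hρ_lub.1 (mem_image_of_mem _ hz)
  refine ⟨⟨fun h => h id (memHw_id hω_int), fun hφ f hf => memHw_comp hφ hf
    (fun z hz => mem_closedBall_zero_iff.2 (hφρ z hz)) hρ_lt⟩, fun hφ k hk => ?_⟩
  obtain rfl | hρ := eq_or_ne ρ 0
  -- Here `(ρ ^ 2)⁻¹ = 0`, so the right side is `0` even for `k = 1`; but then `φ = 0` on `D`.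
  · have hφ0 : EqOn φ 0 unitDisk := fun z hz => norm_le_zero_iff.1 (hφρ z hz)
    calc hwNormSq ω (fun z => φ z ^ k) ≤ ((k : ℝ) * 0 ^ (k - 1)) ^ 2 * hwNormSq ω φ :=
          hwNormSq_pow_le hω hφ hφρ hk
      _ = _ := by simp [hwNormSq_eq_zero_of_eqOn_zero hφ0]
  · calc hwNormSq ω (fun z => φ z ^ k) ≤ ((k : ℝ) * ρ ^ (k - 1)) ^ 2 * hwNormSq ω φ :=
          hwNormSq_pow_le hω hφ hφρ hk
      _ ≤ _ := by
          gcongr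
          · exact hwNormSq_nonneg hω φ
          · exact sq_natCast_mul_pow_pred_le hρ hk

/-- For an analytic self-map `φ` of the unit disk with
`ρ := ‖φ‖_∞ < 1`: `φ` is a symbol for `H_ω` iff `φ ∈ H_ω`, and in that case
`‖φ^k‖² ≤ ρ^{2k} (1 + k² ρ^{-2}) ‖φ‖²` for every `k ≥ 1`. -/
theorem symbol_iff_mem_and_power_bound
    (ω : ℝ → ℝ)
    (hω_cont : ContinuousOn ω (Set.Ico 0 1))
    (hω_pos : ∀ r ∈ Set.Ico (0:ℝ) 1, 0 < ω r)
    (hω_int : IntegrableOn ω (Set.Ico 0 1))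
    (φ : ℂ → ℂ)
    (hφ_diff : DifferentiableOn ℂ φ unitDisk)
    (hφ_maps : Set.MapsTo φ unitDisk unitDisk)
    (ρ : ℝ) (hρ_lub : IsLUB ((fun z => ‖φ z‖) '' unitDisk) ρ) (hρ_lt : ρ < 1) :
    ((∀ f : ℂ → ℂ, memHw ω f → memHw ω (f ∘ φ)) ↔ memHw ω φ) ∧
      (memHw ω φ → ∀ k : ℕ, 1 ≤ k →
        hwNormSq ω (fun z => φ z ^ k)
          ≤ ρ ^ (2 * k) * (1 + (k : ℝ) ^ 2 * (ρ ^ 2)⁻¹) * hwNormSq ω φ) :=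
  symbol_iff_mem_and_power_bound_general ω hω_pos hω_int φ ρ hρ_lub hρ_lt

end
end
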